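/- arXiv:1909.00030 — 3 statements merged into one kernel-verified Lean document; each statement's English description precedes it below -/
import Mathlib

section
/- Let k < n be positive integers, and let G be a graph on n vertices containing no path with n - k edges. Then for every pair (a,b) of positive integers with a + b = k, there exist disjoint vertex sets A, B ⊆ V(G) with |A| = a and |B| = b such that there are no edges of G between A and B. -/
open SimpleGraph Finset

/-- `G` contains a path with exactly `n` edges. -/
def HasPathLen {V : Type*} (G : SimpleGraph V) (n : ℕ) : Prop :=
  ∃ (u v : V) (p : G.Walk u v), p.IsPath ∧ p.length = n

/-!
Run a depth-first search and stop it as soon as `b` vertices are finished. Every neighbour of a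
finished vertex is finished or still on the stack, and the stack is a path of `G`, so it has at
most `n - k` vertices. Hence the `b` finished vertices have no neighbours among the at least
`n - b - (n - k) = a` vertices that are neither finished nor on the stack.
-/

namespace SimpleGraph

variable {V : Type*} {G : SimpleGraph V}

theorem length_le_of_not_hasPathLen {m : ℕ} (h : ¬ HasPathLen G m) {l : List V}
    (hchain : l.IsChain G.Adj) (hnodup : l.Nodup) : l.length ≤ m := by
  by_contra! hlong
  have hne : l.take (m + 1) ≠ [] := by
    rw [← List.length_pos_iff, List.length_take]; omega
  let p := Walk.ofSupport _ hne (hchain.take (m + 1))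
  refine h ⟨_, _, p, ?_, ?_⟩
  · rw [Walk.isPath_def, Walk.support_ofSupport]
    exact hnodup.sublist (List.take_sublist _ _)
  · rw [Walk.length_ofSupport, List.length_take]; omega

/-- A state of a depth-first search of `G`: `B` is the set of finished vertices and `P` the
stack, top first. -/
structure IsDFSState (G : SimpleGraph V) (B : Finset V) (P : List V) : Prop where
  disjoint : ∀ v ∈ B, v ∉ P
  isChain : P.IsChain G.Adj
  nodup : P.Nodup
  closed : ∀ v ∈ B, ∀ u, G.Adj v u → u ∈ B ∨ u ∈ P

namespace IsDFSState

variable {B : Finset V} {P : List V}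

theorem empty : IsDFSState G ∅ [] :=
  ⟨by simp, .nil, .nil, by simp⟩

theorem start (hP : IsDFSState G B []) {x : V} (hx : x ∉ B) : IsDFSState G B [x] :=
  ⟨fun v hv hvx => hx (List.mem_singleton.mp hvx ▸ hv), .singleton x, List.nodup_singleton x,
    fun v hv u huv => (hP.closed v hv u huv).imp_right (by simp)⟩

theorem push {x : V} (hP : IsDFSState G B (x :: P)) {u : V} (hxu : G.Adj x u) (huB : u ∉ B)
    (huP : u ∉ x :: P) : IsDFSState G B (u :: x :: P) :=
  ⟨fun v hv hvP => (List.mem_cons.mp hvP).elim (fun h => huB (h ▸ hv)) (hP.disjoint v hv),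
    List.isChain_cons_cons.mpr ⟨hxu.symm, hP.isChain⟩, List.nodup_cons.mpr ⟨huP, hP.nodup⟩,
    fun v hv w hvw => (hP.closed v hv w hvw).imp_right (List.mem_cons_of_mem u)⟩

theorem pop [DecidableEq V] {x : V} (hP : IsDFSState G B (x :: P))
    (hx : ∀ u, G.Adj x u → u ∈ B ∨ u ∈ x :: P) : IsDFSState G (insert x B) P := by
  refine ⟨?_, hP.isChain.tail, (List.nodup_cons.mp hP.nodup).2, ?_⟩
  · intro v hv hvP
    rcases Finset.mem_insert.mp hv with rfl | hv
    · exact (List.nodup_cons.mp hP.nodup).1 hvP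
    · exact hP.disjoint v hv (List.mem_cons_of_mem x hvP)
  · intro v hv u hvu
    have key : ∀ u, u ∈ B ∨ u ∈ x :: P → u ∈ insert x B ∨ u ∈ P := by
      simp only [List.mem_cons, Finset.mem_insert]; tauto
    rcases Finset.mem_insert.mp hv with rfl | hv
    · exact key u (hx u hvu)
    · exact key u (hP.closed v hv u hvu)

theorem exists_top_saturated [Fintype V] {x : V} {Q : List V} (hQ : IsDFSState G B (x :: Q)) :
    ∃ y R, IsDFSState G B (y :: R) ∧ ∀ u, G.Adj y u → u ∈ B ∨ u ∈ y :: R := by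
  by_cases hx : ∀ u, G.Adj x u → u ∈ B ∨ u ∈ x :: Q
  · exact ⟨x, Q, hQ, hx⟩
  push Not at hx
  obtain ⟨u, hxu, huB, huQ⟩ := hx
  exact (hQ.push hxu huB huQ).exists_top_saturated
termination_by Fintype.card V - Q.length
decreasing_by
  have := (hQ.push hxu huB huQ).nodup.length_le_card
  simp only [List.length_cons] at this ⊢
  omega

theorem exists_card_eq [Fintype V] [DecidableEq V] {b : ℕ} (hb : b ≤ Fintype.card V) :
    ∃ B P, IsDFSState G B P ∧ B.card = b := by
  induction b with
  | zero => exact ⟨∅, [], empty, rfl⟩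
  | succ b ih =>
    obtain ⟨B, P, hP, rfl⟩ := ih (by omega)
    obtain ⟨x, P, hP⟩ : ∃ x P', IsDFSState G B (x :: P') := by
      cases P with
      | cons x P => exact ⟨x, P, hP⟩
      | nil =>
        obtain ⟨x, -, hx⟩ := exists_mem_notMem_of_card_lt_card (s := B) (t := univ)
          (by rw [card_univ]; omega)
        exact ⟨x, [], hP.start hx⟩
    obtain ⟨y, R, hR, hy⟩ := hP.exists_top_saturated
    exact ⟨_, _, hR.pop hy, Finset.card_insert_of_notMem fun h => hR.disjoint y h (.head _)⟩

end IsDFSState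

theorem exists_nonadj_of_not_hasPathLen [Fintype V] {m a b : ℕ} (h : ¬ HasPathLen G m)
    (hcard : a + b + m ≤ Fintype.card V) :
    ∃ A B : Finset V, Disjoint A B ∧ A.card = a ∧ B.card = b ∧
      ∀ u ∈ A, ∀ v ∈ B, ¬ G.Adj u v := by
  classical
  obtain ⟨B, P, hP, hB⟩ := IsDFSState.exists_card_eq (G := G) (b := b) (by omega)
  have hP_len := length_le_of_not_hasPathLen h hP.isChain hP.nodup
  have hA : a ≤ (univ \ (B ∪ P.toFinset)).card := by
    rw [card_sdiff_of_subset (subset_univ _), card_univ]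
    have := (card_union_le B P.toFinset).trans (Nat.add_le_add_left P.toFinset_card_le _)
    omega
  obtain ⟨A, hA_sub, rfl⟩ := exists_subset_card_eq hA
  have hA_out : ∀ u ∈ A, u ∉ B ∧ u ∉ P := fun u hu => by
    simpa [not_or] using (mem_sdiff.mp (hA_sub hu)).2
  refine ⟨A, B, Finset.disjoint_left.mpr fun _ hu => (hA_out _ hu).1, rfl, hB, ?_⟩
  intro u hu v hv huv
  exact (hP.closed v hv u huv.symm).elim (hA_out u hu).1 (hA_out u hu).2

end SimpleGraph

theorem stmt_0_general {V : Type*} [Fintype V] (G : SimpleGraph V) (n k : ℕ)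
    (hkn : k < n) (hV : Fintype.card V = n)
    (hnopath : ¬ HasPathLen G (n - k)) :
    ∀ a b : ℕ, 0 < a → 0 < b → a + b = k →
      ∃ A B : Finset V, Disjoint A B ∧ A.card = a ∧ B.card = b ∧
        ∀ u ∈ A, ∀ v ∈ B, ¬ G.Adj u v :=
  fun _ _ _ _ hab => G.exists_nonadj_of_not_hasPathLen hnopath (by omega)

theorem stmt_0 {V : Type*} [Fintype V] (G : SimpleGraph V) (n k : ℕ)
    (hk : 0 < k) (hkn : k < n) (hV : Fintype.card V = n)
    (hnopath : ¬ HasPathLen G (n - k)) :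
    ∀ a b : ℕ, 0 < a → 0 < b → a + b = k →
      ∃ A B : Finset V, Disjoint A B ∧ A.card = a ∧ B.card = b ∧
        ∀ u ∈ A, ∀ v ∈ B, ¬ G.Adj u v :=
  stmt_0_general G n k hkn hV hnopath
end

section
/- Let r ≥ 2 and t, n be positive integers, and let G be a graph on rn + (r+1)t vertices. Then for every red-blue colouring of the edges of G, either G contains a red path with n edges, or there exist r+1 pairwise disjoint vertex sets A_1, ..., A_{r+1}, each of size t, such that for each 1 ≤ i < j ≤ r+1 every edge of G between A_i and A_j is coloured blue. -/
/-!
Suppose there is no red path with `n` edges and run a depth-first search in the red graph on a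
vertex set `U`. The stack is a red path, so when its top is finished fewer than `n` vertices remain
on it, and every red edge leaving a finished vertex ends at a finished or a stacked vertex.
Stopping once `t` vertices are finished gives a set `A` of size `t` and a set `S` of fewer than `n`
vertices such that no red edge joins `A` to `U \ (A ∪ S)`. Removing `A ∪ S` and repeating yields
`A_1, …, A_{r+1}` and uses at most `(r + 1) t + r (n - 1)` vertices.
-/

open SimpleGraph Finset

/-- The colouring `c` (with `true` = red) contains a red path with `n` edges in `G`. -/
def RedPathLen {V : Type*} (G : SimpleGraph V) (c : Sym2 V → Bool) (n : ℕ) : Prop :=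
  ∃ (u v : V) (p : G.Walk u v), p.IsPath ∧ p.length = n ∧ ∀ e ∈ p.edges, c e = true

namespace SimpleGraph

variable {V : Type*} {H : SimpleGraph V} {n : ℕ}

theorem exists_isPath_length_of_isChain {l : List V} (hne : l ≠ []) (hchain : l.IsChain H.Adj)
    (hnodup : l.Nodup) : ∃ (u v : V) (p : H.Walk u v), p.IsPath ∧ p.length = l.length - 1 :=
  ⟨_, _, Walk.ofSupport l hne hchain, (Walk.isPath_def _).2 (by simpa), by simp⟩

theorem length_le_of_isChain (hP : ∀ (u v : V) (p : H.Walk u v), p.IsPath → p.length ≠ n)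
    {l : List V} (hchain : l.IsChain H.Adj) (hnodup : l.Nodup) : l.length ≤ n := by
  by_contra! hlt
  obtain ⟨u, v, p, hp, hlen⟩ := exists_isPath_length_of_isChain (l := l.take (n + 1))
    (List.ne_nil_of_length_pos (by simp; omega)) (hchain.take _)
    (hnodup.sublist (List.take_sublist _ _))
  exact hP u v p hp (by simp [hlen]; omega)

variable [DecidableEq V]

theorem exists_maximal_isChain_extension (W : Finset V) (l : List V) (hchain : l.IsChain H.Adj)
    (hnodup : l.Nodup) (hlW : ∀ x ∈ l, x ∈ W) :
    ∃ l' : List V, l'.IsChain H.Adj ∧ l'.Nodup ∧ (∀ x ∈ l', x ∈ W) ∧ (∀ x ∈ l, x ∈ l') ∧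
      ∀ w ∈ W, w ∉ l' → ¬ (w :: l').IsChain H.Adj := by
  by_cases hext : ∃ w ∈ W, w ∉ l ∧ (w :: l).IsChain H.Adj
  · obtain ⟨w, hwW, hwl, hwchain⟩ := hext
    have hlen : l.length < #W := by
      rw [← List.toFinset_card_of_nodup hnodup]
      refine card_lt_card ⟨fun x hx => hlW x (List.mem_toFinset.1 hx), fun hW => hwl ?_⟩
      exact List.mem_toFinset.1 (hW hwW)
    obtain ⟨l', hchain', hnodup', hl'W, hll', hmax⟩ := exists_maximal_isChain_extension W (w :: l)
      hwchain (hnodup.cons hwl) (List.forall_mem_cons.2 ⟨hwW, hlW⟩)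
    exact ⟨l', hchain', hnodup', hl'W, fun x hx => hll' x (List.mem_cons_of_mem _ hx), hmax⟩
  · push Not at hext
    exact ⟨l, hchain, hnodup, hlW, fun _ h => h, hext⟩
termination_by #W - l.length
decreasing_by simp only [List.length_cons]; omega

variable (hP : ∀ (u v : V) (p : H.Walk u v), p.IsPath → p.length ≠ n)
include hP

/-- The state of a depth-first search after `k` vertices are finished: `A` is the finished set and
`l` the stack, read from its top. -/
theorem exists_finished_set_and_stack (hn : 0 < n) (U : Finset V) {k : ℕ} (hk : k ≤ #U) :
    ∃ A ⊆ U, #A = k ∧ ∃ l : List V, l.IsChain H.Adj ∧ l.Nodup ∧ l.length < n ∧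
      (∀ x ∈ l, x ∈ U \ A) ∧ ∀ u ∈ A, ∀ w ∈ U, H.Adj u w → w ∈ A ∨ w ∈ l := by
  induction k with
  | zero => exact ⟨∅, empty_subset _, card_empty, [], .nil, List.nodup_nil, hn, by simp, by simp⟩
  | succ k ih =>
    obtain ⟨A, hAU, hAk, l, hchain, hnodup, -, hlU, hA⟩ := ih (by omega)
    -- Extend the stack as far as possible inside `U \ A`, then finish its top `v`.
    obtain ⟨l', hchain', hnodup', hl'U, hll', hmax⟩ :=
      exists_maximal_isChain_extension (U \ A) l hchain hnodup hlU
    obtain ⟨v, l, rfl⟩ : ∃ v l, l' = v :: l := by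
      cases l' with
      | nil =>
        obtain ⟨w, hw⟩ : (U \ A).Nonempty := by
          rw [← card_pos, card_sdiff_of_subset hAU]; omega
        exact absurd (List.isChain_singleton w) (hmax w hw List.not_mem_nil)
      | cons v l => exact ⟨v, l, rfl⟩
    obtain ⟨hvU, hvA⟩ := mem_sdiff.1 (hl'U v List.mem_cons_self)
    refine ⟨insert v A, insert_subset hvU hAU, by rw [card_insert_of_notMem hvA, hAk], l,
      hchain'.tail, hnodup'.of_cons, ?_, ?_, ?_⟩
    · have := length_le_of_isChain hP hchain' hnodup'
      simp only [List.length_cons] at this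
      omega
    · intro x hx
      have hxv : x ≠ v := fun h => (List.nodup_cons.1 hnodup').1 (h ▸ hx)
      simpa [hxv] using hl'U x (List.mem_cons_of_mem _ hx)
    · intro u hu w hwU hadj
      rcases mem_insert.1 hu with rfl | hu
      · by_contra! hw
        simp only [mem_insert, not_or] at hw
        exact hmax w (mem_sdiff.2 ⟨hwU, hw.1.2⟩) (by simp [hw.1.1, hw.2])
          (List.isChain_cons_cons.2 ⟨hadj.symm, hchain'⟩)
      · rcases hA u hu w hwU hadj with hw | hw
        · exact .inl (mem_insert_of_mem hw)
        · rcases List.mem_cons.1 (hll' w hw) with rfl | hw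
          · exact .inl (mem_insert_self _ _)
          · exact .inr hw

theorem exists_card_eq_nonadj_outside (hn : 0 < n) {U : Finset V} {t : ℕ} (ht : t ≤ #U) :
    ∃ A ⊆ U, ∃ S ⊆ U, Disjoint A S ∧ #A = t ∧ #S < n ∧
      ∀ u ∈ A, ∀ w ∈ U \ (A ∪ S), ¬ H.Adj u w := by
  obtain ⟨A, hAU, hAt, l, -, -, hln, hlU, hA⟩ := exists_finished_set_and_stack hP hn U ht
  refine ⟨A, hAU, l.toFinset, fun x hx => (mem_sdiff.1 (hlU x (List.mem_toFinset.1 hx))).1,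
    disjoint_right.2 fun x hx => (mem_sdiff.1 (hlU x (List.mem_toFinset.1 hx))).2, hAt,
    (List.toFinset_card_le l).trans_lt hln, fun u hu w hw hadj => ?_⟩
  simp only [mem_sdiff, mem_union, List.mem_toFinset, not_or] at hw
  rcases hA u hu w hw.1 hadj with h | h
  exacts [hw.2.1 h, hw.2.2 h]

theorem exists_pairwise_nonadj_family (hn : 0 < n) {t : ℕ} :
    ∀ (r : ℕ) (U : Finset V), (r + 1) * t + r * (n - 1) ≤ #U →
      ∃ A : Fin (r + 1) → Finset V, (∀ i, A i ⊆ U) ∧ (∀ i, #(A i) = t) ∧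
        Pairwise fun i j => Disjoint (A i) (A j) ∧ ∀ u ∈ A i, ∀ v ∈ A j, ¬ H.Adj u v
  | 0, U, hU => by
    obtain ⟨B, hBU, hB⟩ := exists_subset_card_eq (s := U) (n := t) (by omega)
    exact ⟨fun _ => B, fun _ => hBU, fun _ => hB,
      fun i j hij => (hij (Subsingleton.elim (α := Fin 1) i j)).elim⟩
  | r + 1, U, hU => by
    obtain ⟨A₀, hA₀U, S, hSU, hA₀S, hA₀, hS, hsep⟩ :=
      exists_card_eq_nonadj_outside hP hn (U := U) (t := t) (by nlinarith)
    have hU' : (r + 1) * t + r * (n - 1) ≤ #(U \ (A₀ ∪ S)) := by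
      rw [card_sdiff_of_subset (union_subset hA₀U hSU), card_union_of_disjoint hA₀S]
      have e₁ : (r + 1 + 1) * t = (r + 1) * t + t := by ring
      have e₂ : (r + 1) * (n - 1) = r * (n - 1) + (n - 1) := by ring
      omega
    obtain ⟨A, hAU, hA, hApair⟩ := exists_pairwise_nonadj_family hn r _ hU'
    have hA₀A : ∀ i, Disjoint A₀ (A i) ∧ ∀ u ∈ A₀, ∀ v ∈ A i, ¬ H.Adj u v := fun i =>
      ⟨(disjoint_sdiff.mono_right (sdiff_subset_sdiff subset_rfl subset_union_left)).mono_right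
          (hAU i),
        fun u hu v hv => hsep u hu v (hAU i hv)⟩
    refine ⟨Fin.cons A₀ A, Fin.cases hA₀U fun i => (hAU i).trans sdiff_subset,
      Fin.cases hA₀ hA, pairwise_fin_succ_iff.2 ⟨fun i => ?_, hA₀A, hApair⟩⟩
    exact ⟨(hA₀A i).1.symm, fun u hu v hv huv => (hA₀A i).2 v hv u hu huv.symm⟩

end SimpleGraph

theorem redPathLen_of_isPath {V : Type*} {G : SimpleGraph V} {c : Sym2 V → Bool} {u v : V}
    {p : (G.deleteEdges {e | c e = false}).Walk u v} (hp : p.IsPath) : RedPathLen G c p.length :=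
  ⟨u, v, p.mapLe (deleteEdges_le _), hp.mapLe _, p.length_mapLe _, fun e he => by
    rw [Walk.edges_mapLe_eq_edges] at he
    exact (by simpa using p.edges_subset_edgeSet he : _ ∧ _).2⟩

theorem stmt_1_general {V : Type*} [Fintype V] (G : SimpleGraph V) (r n t : ℕ)
    (hn : 0 < n)
    (hV : Fintype.card V = r * n + (r + 1) * t)
    (c : Sym2 V → Bool) :
    RedPathLen G c n ∨
      ∃ A : Fin (r + 1) → Finset V,
        (∀ i j, i ≠ j → Disjoint (A i) (A j)) ∧
        (∀ i, (A i).card = t) ∧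
        (∀ i j, i ≠ j → ∀ u ∈ A i, ∀ v ∈ A j, G.Adj u v → c s(u, v) = false) := by
  classical
  refine or_iff_not_imp_left.2 fun hred => ?_
  have hP : ∀ (u v : V) (p : (G.deleteEdges {e | c e = false}).Walk u v),
      p.IsPath → p.length ≠ n := fun u v p hp hlen => hred (hlen ▸ redPathLen_of_isPath hp)
  have hU : (r + 1) * t + r * (n - 1) ≤ #(univ : Finset V) := by
    have := Nat.mul_le_mul_left r (Nat.sub_le n 1)
    rw [card_univ, hV]
    omega
  obtain ⟨A, -, hAt, hA⟩ := exists_pairwise_nonadj_family hP hn r univ hU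
  refine ⟨A, fun i j hij => (hA hij).1, hAt, fun i j hij u hu v hv hadj => ?_⟩
  simpa [hadj] using (hA hij).2 u hu v hv

theorem stmt_1 {V : Type*} [Fintype V] (G : SimpleGraph V) (r n t : ℕ)
    (hr : 2 ≤ r) (hn : 0 < n) (ht : 0 < t)
    (hV : Fintype.card V = r * n + (r + 1) * t)
    (c : Sym2 V → Bool) :
    RedPathLen G c n ∨
      ∃ A : Fin (r + 1) → Finset V,
        (∀ i j, i ≠ j → Disjoint (A i) (A j)) ∧
        (∀ i, (A i).card = t) ∧
        (∀ i j, i ≠ j → ∀ u ∈ A i, ∀ v ∈ A j, G.Adj u v → c s(u, v) = false) :=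
  stmt_1_general G r n t hn hV c
end

section
/- For all integers r ≥ 1 and m ≥ 1, the Ramsey number of the complete graph K_r versus any tree T on m vertices satisfies R(K_r, T) = (r - 1)(m - 1) + 1. -/
/-!
If `R` has no `K_{r+1}` and more than `r(m-1)` vertices, then `Rᶜ` contains every tree `T` on `m`
vertices. Induct on `r` and, inside, on `m`: embed `T` minus a leaf `u` (attached to `w`) into
`Rᶜ`. If the image `x` of `w` has an `Rᶜ`-neighbour outside this copy, send `u` there. Otherwise
the more than `(r-1)(m-1)` vertices outside the copy all lie in the `R`-neighbourhood of `x`,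
so they span no `K_r`, and the induction on `r` finds `T` among them.

For sharpness, the Turán graph with `r-1` parts on at most `(r-1)(m-1)` vertices has no `K_r`,
and its complement is a disjoint union of cliques of size at most `m-1`, which cannot contain a
connected graph on `m` vertices.
-/

open SimpleGraph Finset

/-- `G` contains a copy of `H` (a subgraph isomorphic to `H`). -/
def ContainsCopy {V W : Type*} (G : SimpleGraph V) (H : SimpleGraph W) : Prop :=
  ∃ f : W ↪ V, ∀ a b, H.Adj a b → G.Adj (f a) (f b)

/-- The Ramsey number `R(H, G)`: the least `N` such that every red-blue colouring of the
edges of `K_N` (the red graph `R` being an arbitrary graph on `Fin N`, blue graph `Rᶜ`)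
contains a red copy of `H` or a blue copy of `G`. -/
noncomputable def ramseyNumber {V W : Type*} (H : SimpleGraph V) (G : SimpleGraph W) : ℕ :=
  sInf {N | ∀ R : SimpleGraph (Fin N), ContainsCopy R H ∨ ContainsCopy Rᶜ G}

section

variable {V W : Type*}

lemma containsCopy_iff_isContained {G : SimpleGraph V} {H : SimpleGraph W} :
    ContainsCopy G H ↔ H ⊑ G := by
  rw [isContained_iff_exists_le_comap]
  rfl

lemma ramseyNumber_eq {H : SimpleGraph V} {G : SimpleGraph W} {n : ℕ}
    (hup : ∀ R : SimpleGraph (Fin n), H ⊑ R ∨ G ⊑ Rᶜ)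
    (hlow : ∀ N < n, ∃ R : SimpleGraph (Fin N), ¬H ⊑ R ∧ ¬G ⊑ Rᶜ) :
    ramseyNumber H G = n := by
  simp only [ramseyNumber, containsCopy_iff_isContained]
  refine IsLeast.csInf_eq ⟨hup, fun N hN => not_lt.1 fun hlt => ?_⟩
  obtain ⟨R, hH, hG⟩ := hlow N hlt
  exact (hN R).elim hH hG

end

namespace SimpleGraph

variable {V W : Type*}

lemma Preconnected.eq_of_forall_adj {α : Type*} {G : SimpleGraph V} (hG : G.Preconnected)
    {φ : V → α} (h : ∀ a b, G.Adj a b → φ a = φ b) (a b : V) : φ a = φ b := by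
  obtain ⟨p⟩ := hG a b
  induction p with
  | nil => rfl
  | cons hadj _ ih => exact (h _ _ hadj).trans ih

lemma IsTree.exists_leaf_isTree_induce_compl [Finite W] [Nontrivial W] {T : SimpleGraph W}
    (hT : T.IsTree) :
    ∃ u w, T.Adj u w ∧ (∀ x, T.Adj u x → x = w) ∧ (T.induce {u}ᶜ).IsTree := by
  have := Fintype.ofFinite W
  classical
  obtain ⟨u, hu⟩ := hT.exists_vert_degree_one_of_nontrivial
  obtain ⟨w, huw, hw⟩ := degree_eq_one_iff_existsUnique_adj.mp hu
  exact ⟨u, w, huw, hw, hT.connected.induce_compl_singleton_of_degree_eq_one hu,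
    hT.isAcyclic.induce _⟩

lemma isContained_of_subsingleton [Subsingleton W] [Nonempty V] (H : SimpleGraph W)
    (G : SimpleGraph V) : H ⊑ G :=
  let v : V := Classical.arbitrary V
  ⟨⟨⟨fun _ => v, fun h => (h.ne (Subsingleton.elim _ _)).elim⟩,
    fun _ _ _ => Subsingleton.elim _ _⟩⟩

lemma isContained_of_copy_induce_compl_leaf {G : SimpleGraph V} {T : SimpleGraph W} {u w : W}
    (hw : w ≠ u) (hleaf : ∀ x, T.Adj u x → x = w) (f : Copy (T.induce {u}ᶜ) G) {y : V}
    (hy : y ∉ Set.range f) (hadj : G.Adj (f ⟨w, hw⟩) y) : T ⊑ G := by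
  classical
  let g : W → V := fun x => if h : x = u then y else f ⟨x, h⟩
  refine ⟨⟨⟨g, fun {a b} hab => ?_⟩, ?_⟩⟩
  · by_cases ha : a = u <;> by_cases hb : b = u
    · exact (hab.ne (ha.trans hb.symm)).elim
    · obtain rfl := hleaf b (ha ▸ hab)
      simpa [g, ha, hb] using hadj.symm
    · obtain rfl := hleaf a (hb ▸ hab.symm)
      simpa [g, ha, hb] using hadj
    · have hab' : (T.induce {u}ᶜ).Adj ⟨a, ha⟩ ⟨b, hb⟩ := hab
      simpa [g, ha, hb] using f.toHom.map_adj hab'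
  · exact Function.Injective.dite (· = u) (f := fun _ => y) (f' := fun x => f ⟨x.1, x.2⟩)
      (fun _ _ _ => Subsingleton.elim _ _)
      (fun _ _ h => Subtype.ext (congrArg Subtype.val (f.injective h))) fun h => hy ⟨_, h.symm⟩

lemma CliqueFree.induce_of_subset_neighborSet {G : SimpleGraph V} {n : ℕ}
    (hG : G.CliqueFree (n + 1)) {x : V} {s : Set V} (hs : s ⊆ G.neighborSet x) :
    (G.induce s).CliqueFree n := by
  rw [cliqueFree_induce_iff]
  exact CliqueFreeOn.subset G (fun _ hv => Set.mem_inter trivial (hs hv))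
    (CliqueFreeOn.of_succ G ((cliqueFreeOn_univ G).2 hG) (Set.mem_univ x))

lemma compl_induce_isContained_compl (G : SimpleGraph V) (s : Set V) : (G.induce s)ᶜ ⊑ Gᶜ :=
  ⟨⟨⟨Subtype.val, fun h => ⟨Subtype.val_injective.ne h.1, h.2⟩⟩,
    Subtype.val_injective⟩⟩

theorem isContained_compl_of_cliqueFree [Finite V] [Finite W] {R : SimpleGraph V}
    {T : SimpleGraph W} (hT : T.IsTree) {r : ℕ} (hR : R.CliqueFree (r + 1))
    (hV : r * (Nat.card W - 1) < Nat.card V) : T ⊑ Rᶜ := by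
  induction r generalizing V W with
  | zero =>
    have : Nonempty V := Finite.card_pos_iff.1 (by simpa using hV)
    exact (not_isEmpty_of_nonempty V (cliqueFree_one.1 hR)).elim
  | succ r ih =>
    induction W using Finite.induction_subsingleton_or_nontrivial with
    | hbase W =>
      have : Nonempty V := Finite.card_pos_iff.1 (by omega)
      exact isContained_of_subsingleton T Rᶜ
    | hstep W ihW =>
      obtain ⟨u, w, huw, hleaf, hT'⟩ := hT.exists_leaf_isTree_induce_compl
      have hcard : Nat.card ({u}ᶜ : Set W) = Nat.card W - 1 := by
        rw [Nat.card_coe_set_eq, Set.ncard_compl, Set.ncard_singleton]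
      obtain ⟨f⟩ := ihW _ (by have := Finite.card_pos (α := W); omega) hT' (by
        rw [hcard]; exact lt_of_le_of_lt (Nat.mul_le_mul_left _ (by omega)) hV)
      set x := f ⟨w, huw.ne'⟩
      by_cases hext : ∃ y ∉ Set.range f, Rᶜ.Adj x y
      · obtain ⟨y, hy, hxy⟩ := hext
        exact isContained_of_copy_induce_compl_leaf huw.ne' hleaf f hy hxy
      push Not at hext
      have hsub : (Set.range f)ᶜ ⊆ R.neighborSet x := fun y hy => by
        have hxy : x ≠ y := fun h => hy ⟨_, h⟩
        simpa [hxy] using hext y hy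
      refine (ih hT (hR.induce_of_subset_neighborSet hsub) ?_).trans
        (compl_induce_isContained_compl R _)
      rw [Nat.card_coe_set_eq, Set.ncard_compl,
        Set.ncard_range_of_injective (f := ⇑f) f.injective, hcard]
      rw [Nat.succ_mul] at hV
      omega

lemma turanGraph_cliqueFree_of_le {N k n : ℕ} (hN : N ≤ k * n) :
    (turanGraph N k).CliqueFree (k + 1) := by
  rcases k.eq_zero_or_pos with rfl | hk
  · exact cliqueFree_of_card_lt (by simp_all)
  · exact turanGraph_cliqueFree hk

lemma not_isContained_compl_turanGraph [Finite W] {T : SimpleGraph W} (hT : T.Connected)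
    {N k : ℕ} (hN : N ≤ k * (Nat.card W - 1)) : ¬T ⊑ (turanGraph N k)ᶜ := by
  rintro ⟨f⟩
  have hmod := hT.preconnected.eq_of_forall_adj (φ := fun x => (f x : ℕ) % k) fun a b hab => by
    simpa [turanGraph_adj] using (f.toHom.map_adj hab).2
  have hinj : Function.Injective fun x => (⟨(f x : ℕ) / k,
      Nat.div_lt_of_lt_mul ((f x).2.trans_le hN)⟩ : Fin (Nat.card W - 1)) := by
    intro a b hab
    have hdiv : (f a : ℕ) / k = f b / k := congrArg Fin.val hab
    refine f.injective (Fin.ext (?_ : (f a : ℕ) = f b))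
    rw [← Nat.div_add_mod (f a : ℕ) k, ← Nat.div_add_mod (f b : ℕ) k, hmod a b, hdiv]
  have hle := Nat.card_le_card_of_injective _ hinj
  have := hT.nonempty
  have := Finite.card_pos (α := W)
  rw [Nat.card_fin] at hle
  omega

end SimpleGraph

theorem stmt_17_general (r m : ℕ) (hr : 1 ≤ r)
    {VT : Type*} [Fintype VT] (T : SimpleGraph VT)
    (hT : T.IsTree) (hcard : Fintype.card VT = m) :
    ramseyNumber (⊤ : SimpleGraph (Fin r)) T = (r - 1) * (m - 1) + 1 := by
  obtain ⟨k, rfl⟩ : ∃ k, r = k + 1 := ⟨r - 1, by omega⟩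
  rw [Nat.add_sub_cancel, ← hcard, ← Nat.card_eq_fintype_card]
  refine ramseyNumber_eq (fun R => ?_) fun N hN => ⟨turanGraph N k, ?_, ?_⟩
  · rw [or_iff_not_imp_left, ← not_cliqueFree_iff_top_isContained, not_not]
    exact fun hR => isContained_compl_of_cliqueFree hT hR (by simp)
  · exact fun h =>
      h.not_cliqueFree (turanGraph_cliqueFree_of_le (n := Nat.card VT - 1) (by omega))
  · exact not_isContained_compl_turanGraph hT.connected (by omega)

theorem stmt_17 (r m : ℕ) (hr : 1 ≤ r) (hm : 1 ≤ m)
    {VT : Type*} [Fintype VT] (T : SimpleGraph VT)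
    (hT : T.IsTree) (hcard : Fintype.card VT = m) :
    ramseyNumber (⊤ : SimpleGraph (Fin r)) T = (r - 1) * (m - 1) + 1 :=
  stmt_17_general r m hr T hT hcard
end
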